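/- Let |·|_{G_1},…,|·|_{G_N} be norms on ℝ^n, let |·|_S be a monotone norm on ℝ^N, and let |·|_G be the associated composite norm on ℝ^{nN}. Let A ∈ ℝ^{nN×nN} be partitioned into blocks A_{ij} ∈ ℝ^{n×n}, and define the N×N nonnegative matrix Ā by Ā_{ij} = ‖A_{ij}‖_{G_{i,j}}, the operator norm of A_{ij} viewed as a linear map from (ℝ^n, |·|_{G_j}) to (ℝ^n, |·|_{G_i}). Then ‖A‖_G ≤ ‖Ā‖_S, where ‖·‖_G and ‖·‖_S denote the matrix norms induced by |·|_G and |·|_S respectively. -/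

import Mathlib

/-!
By the triangle inequality in `|·|_{G_i}` and the definition of the block operator norms, each
block row satisfies `|(Aη)_i|_{G_i} ≤ ∑_j Ā_{ij} |η_j|_{G_j} = (Ā v)_i` with
`v = (|η_j|_{G_j})_j`. Monotonicity of `|·|_S` turns this componentwise bound into
`|Aη|_G ≤ |Ā v|_S ≤ ‖Ā‖_S |v|_S = ‖Ā‖_S |η|_G`.

Since `opNorm` is a real `sSup`, `|L x| ≤ opNorm L * |x|` needs the image of the unit sphere to be
bounded; on `ι → ℝ` this holds because every seminorm is dominated by a multiple of the sup norm,
which in turn is dominated by any norm (the sup-norm sphere is compact).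
-/

open Filter Set

/-- `ν` is a norm on the real vector space `E`. -/
def IsNorm {E : Type*} [AddCommGroup E] [Module ℝ E] (ν : E → ℝ) : Prop :=
  (∀ x, 0 ≤ ν x) ∧ (∀ x, ν x = 0 → x = 0) ∧
  (∀ (a : ℝ) (x : E), ν (a • x) = |a| * ν x) ∧
  (∀ x y : E, ν (x + y) ≤ ν x + ν y)

/-- The operator norm of a map `L` with respect to a norm `νE` on the domain and a norm
`νF` on the codomain: the supremum of `νF (L x)` over the unit sphere `νE x = 1`. -/
noncomputable def opNorm {E F : Type*} (νE : E → ℝ) (νF : F → ℝ) (L : E → F) : ℝ :=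
  sSup {c | ∃ x, νE x = 1 ∧ c = νF (L x)}

/-- The action on `ℝ^{nN}` (viewed as `Fin N → Fin n → ℝ`) of the block-partitioned matrix
`A ∈ ℝ^{nN×nN}` with blocks `A i j ∈ ℝ^{n×n}`. -/
noncomputable def blockMulVec {N n : ℕ} (A : Fin N → Fin N → Matrix (Fin n) (Fin n) ℝ)
    (η : Fin N → Fin n → ℝ) : Fin N → Fin n → ℝ :=
  fun i => ∑ j, (A i j).mulVec (η j)

open scoped NNReal

namespace IsNorm

variable {E : Type*} [AddCommGroup E] [Module ℝ E] {ν : E → ℝ}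

theorem nonneg (h : IsNorm ν) (x : E) : 0 ≤ ν x := h.1 x

theorem apply_smul (h : IsNorm ν) (a : ℝ) (x : E) : ν (a • x) = |a| * ν x := h.2.2.1 a x

theorem add_le (h : IsNorm ν) (x y : E) : ν (x + y) ≤ ν x + ν y := h.2.2.2 x y

theorem pos_of_ne_zero (h : IsNorm ν) {x : E} (hx : x ≠ 0) : 0 < ν x :=
  (h.nonneg x).lt_of_ne fun h0 => hx (h.2.1 x h0.symm)

def toSeminorm (h : IsNorm ν) : Seminorm ℝ E :=
  Seminorm.of ν h.add_le fun a x => by rw [h.apply_smul, Real.norm_eq_abs]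

theorem apply_zero (h : IsNorm ν) : ν 0 = 0 := map_zero h.toSeminorm

end IsNorm

section FiniteDimensional

variable {ι : Type*} [Fintype ι]

theorem Seminorm.exists_le_smul_normSeminorm (p : Seminorm ℝ (ι → ℝ)) :
    ∃ C : ℝ≥0, p ≤ C • normSeminorm ℝ (ι → ℝ) := by
  classical
  have hC : 0 ≤ ∑ i, p (Pi.single i 1) := Finset.sum_nonneg fun i _ => apply_nonneg p _
  refine ⟨⟨_, hC⟩, Seminorm.le_def.2 fun x => ?_⟩
  show p x ≤ (∑ i, p (Pi.single i 1)) * ‖x‖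
  have hsingle : ∀ i, p (Pi.single i (x i)) = |x i| * p (Pi.single i 1) := fun i => by
    rw [← Real.norm_eq_abs, ← map_smul_eq_mul, ← Pi.single_smul, smul_eq_mul, mul_one]
  calc p x = p (∑ i, Pi.single i (x i)) := by rw [Finset.univ_sum_single]
    _ ≤ ∑ i, p (Pi.single i (x i)) :=
      Finset.le_sum_of_subadditive p (map_zero p).le (map_add_le_add p) _ _
    _ ≤ ∑ i, ‖x‖ * p (Pi.single i 1) := by
      rw [Finset.sum_congr rfl fun i _ => hsingle i]
      gcongr with i
      exact norm_le_pi_norm x i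
    _ = _ := by rw [← Finset.mul_sum, mul_comm]

theorem Seminorm.continuous_of_fintype (p : Seminorm ℝ (ι → ℝ)) : Continuous p := by
  obtain ⟨C, hC⟩ := p.exists_le_smul_normSeminorm
  refine Seminorm.continuous_of_le ?_ hC
  simpa only [FunLike.coe_smul, coe_normSeminorm] using continuous_norm.const_smul C

theorem IsNorm.exists_pos_mul_norm_le {ν : (ι → ℝ) → ℝ} (h : IsNorm ν) :
    ∃ c > 0, ∀ x, c * ‖x‖ ≤ ν x := by
  obtain ⟨c, hc, hsphere⟩ : ∃ c > 0, ∀ u ∈ Metric.sphere (0 : ι → ℝ) 1, c ≤ ν u := by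
    rcases (Metric.sphere (0 : ι → ℝ) 1).eq_empty_or_nonempty with hempty | hne
    · exact ⟨1, one_pos, by simp [hempty]⟩
    · obtain ⟨u₀, hu₀, hmin⟩ := (isCompact_sphere (0 : ι → ℝ) 1).exists_isMinOn hne
        (h.toSeminorm.continuous_of_fintype.continuousOn)
      refine ⟨ν u₀, h.pos_of_ne_zero (ne_zero_of_mem_unit_sphere ⟨u₀, hu₀⟩), fun u hu => hmin hu⟩
  refine ⟨c, hc, fun x => ?_⟩
  rcases eq_or_ne x 0 with rfl | hx
  · simpa using h.nonneg 0
  have hx' : 0 < ‖x‖ := norm_pos_iff.2 hx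
  have hunit := hsphere (‖x‖⁻¹ • x) (by simp [norm_smul, hx'.ne'])
  rw [h.apply_smul, abs_of_pos (inv_pos.2 hx'), le_inv_mul_iff₀ hx'] at hunit
  linarith

theorem Seminorm.exists_le_mul_of_isNorm (p : Seminorm ℝ (ι → ℝ)) {ν : (ι → ℝ) → ℝ}
    (hν : IsNorm ν) : ∃ C, ∀ x, p x ≤ C * ν x := by
  obtain ⟨C, hC⟩ := p.exists_le_smul_normSeminorm
  obtain ⟨c, hc, hcν⟩ := hν.exists_pos_mul_norm_le
  refine ⟨C / c, fun x => ?_⟩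
  calc p x ≤ C * ‖x‖ := Seminorm.le_def.1 hC x
    _ ≤ C * (ν x / c) := by gcongr; rw [le_div_iff₀ hc]; linarith [hcν x]
    _ = C / c * ν x := by ring

end FiniteDimensional

section opNorm

variable {E F : Type*}

theorem opNorm_le_of_forall {νE : E → ℝ} {νF : F → ℝ} {L : E → F} {M : ℝ} (hM : 0 ≤ M)
    (h : ∀ x, νE x = 1 → νF (L x) ≤ M) : opNorm νE νF L ≤ M :=
  Real.sSup_le (fun _ ⟨x, hx, hc⟩ => hc ▸ h x hx) hM

variable [AddCommGroup F] [Module ℝ F]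

theorem opNorm_nonneg (νE : E → ℝ) {νF : F → ℝ} (hF : IsNorm νF) (L : E → F) :
    0 ≤ opNorm νE νF L :=
  Real.sSup_nonneg fun _ ⟨_, _, hc⟩ => hc ▸ hF.nonneg _

variable [AddCommGroup E] [Module ℝ E]

theorem le_opNorm_mul_of_bound {νE : E → ℝ} {νF : F → ℝ} (hE : IsNorm νE) (hF : IsNorm νF)
    (L : E →ₗ[ℝ] F) (hL : ∃ C, ∀ x, νF (L x) ≤ C * νE x) (x : E) :
    νF (L x) ≤ opNorm νE νF L * νE x := by
  obtain ⟨C, hC⟩ := hL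
  have hbdd : BddAbove {c | ∃ x, νE x = 1 ∧ c = νF (L x)} :=
    ⟨C, fun _ ⟨y, hy, hc⟩ => hc ▸ by simpa [hy] using hC y⟩
  rcases eq_or_ne x 0 with rfl | hx
  · simp [hE.apply_zero, hF.apply_zero]
  have hxpos := hE.pos_of_ne_zero hx
  have hunit : νE ((νE x)⁻¹ • x) = 1 := by
    rw [hE.apply_smul, abs_of_pos (inv_pos.2 hxpos), inv_mul_cancel₀ hxpos.ne']
  have hle := le_csSup hbdd ⟨_, hunit, rfl⟩
  rwa [map_smul, hF.apply_smul, abs_of_pos (inv_pos.2 hxpos), inv_mul_le_iff₀ hxpos,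
    mul_comm] at hle

theorem IsNorm.le_opNorm_mul {ι : Type*} [Fintype ι] {νE : (ι → ℝ) → ℝ} {νF : F → ℝ}
    (hE : IsNorm νE) (hF : IsNorm νF) (L : (ι → ℝ) →ₗ[ℝ] F) (x : ι → ℝ) :
    νF (L x) ≤ opNorm νE νF L * νE x :=
  le_opNorm_mul_of_bound hE hF L ((hF.toSeminorm.comp L).exists_le_mul_of_isNorm hE) x

end opNorm

theorem apply_blockMulVec_le {N n : ℕ} {G : Fin N → (Fin n → ℝ) → ℝ} (hG : ∀ i, IsNorm (G i))
    (A : Fin N → Fin N → Matrix (Fin n) (Fin n) ℝ) (η : Fin N → Fin n → ℝ) (i : Fin N) :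
    G i (blockMulVec A η i) ≤ ∑ j, opNorm (G j) (G i) (A i j).mulVec * G j (η j) :=
  calc G i (blockMulVec A η i) ≤ ∑ j, G i ((A i j).mulVec (η j)) :=
        Finset.le_sum_of_subadditive (G i) (hG i).apply_zero.le (hG i).add_le _ _
    _ ≤ ∑ j, opNorm (G j) (G i) (A i j).mulVec * G j (η j) :=
        Finset.sum_le_sum fun j _ => (hG j).le_opNorm_mul (hG i) (A i j).mulVecLin (η j)

/-- Let `|·|_{G_i}` be norms on `ℝ^n`, `|·|_S` a monotone norm on `ℝ^N`, and
`|·|_G` the composite norm `|η|_G = |(|η_1|_{G_1},…,|η_N|_{G_N})|_S` on `ℝ^{nN}`.  For a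
block-partitioned `A ∈ ℝ^{nN×nN}`, let `Ā` be the nonnegative `N×N` matrix with
`Ā_{ij} = ‖A_{ij}‖_{G_{i,j}}` (operator norm of `A_{ij}` from `(ℝ^n,|·|_{G_j})` to
`(ℝ^n,|·|_{G_i})`).  Then `‖A‖_G ≤ ‖Ā‖_S`, where `‖·‖_G` and `‖·‖_S` are the matrix norms
induced by `|·|_G` and `|·|_S`. -/
theorem opNorm_composite_le_opNorm_majorant
    {n N : ℕ}
    (G : Fin N → (Fin n → ℝ) → ℝ) (hG : ∀ i, IsNorm (G i))
    (S : (Fin N → ℝ) → ℝ) (hS : IsNorm S)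
    (hSmono : ∀ x y : Fin N → ℝ, (∀ i, 0 ≤ x i) → (∀ i, x i ≤ y i) → S x ≤ S y)
    (A : Fin N → Fin N → Matrix (Fin n) (Fin n) ℝ)
    (Abar : Matrix (Fin N) (Fin N) ℝ)
    (hAbar : ∀ i j, Abar i j = opNorm (G j) (G i) (A i j).mulVec) :
    opNorm (fun η : Fin N → Fin n → ℝ => S (fun i => G i (η i)))
        (fun η : Fin N → Fin n → ℝ => S (fun i => G i (η i)))
        (blockMulVec A)
      ≤ opNorm S S Abar.mulVec := by
  refine opNorm_le_of_forall (opNorm_nonneg S hS _) fun η hη => ?_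
  set x : Fin N → ℝ := fun j => G j (η j)
  have hblock : ∀ i, G i (blockMulVec A η i) ≤ (Abar.mulVec x) i := fun i => by
    simpa only [Matrix.mulVec, dotProduct, hAbar] using apply_blockMulVec_le hG A η i
  calc S (fun i => G i (blockMulVec A η i)) ≤ S (Abar.mulVec x) :=
        hSmono _ _ (fun i => (hG i).nonneg _) hblock
    _ ≤ opNorm S S Abar.mulVec * S x := hS.le_opNorm_mul hS Abar.mulVecLin x
    _ = opNorm S S Abar.mulVec := by rw [show S x = 1 from hη, mul_one]
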